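/- Let f be a mapping from the vertex set of the diamond graph D_2 into the Hilbert space ℓ^2 and let c be a constant such that for all vertices a, b of D_2: d(a,b) ≤ ‖f(a) − f(b)‖_2^2 ≤ c·d(a,b), where d is the shortest-path metric on D_2. Then c ≥ 5/4. -/
import Mathlib


/-- A graph presented by an (oriented) edge family with source and target maps. -/
structure PreGraph where
  V : Type
  E : Type
  s : E → V
  t : E → V

/-- Replace every edge `uv` of `G` by a quadrilateral `u, a, v, b` with edges
`ua, av, vb, bu`. The two new internal vertices per edge are indexed by `Fin 2`
as `0 = a`, `1 = b`. -/
def diamondStep (G : PreGraph) : PreGraph where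
  V := G.V ⊕ (G.E × Fin 2)
  E := G.E × Fin 4
  s := fun p => ![Sum.inl (G.s p.1), Sum.inr (p.1, 0),
                  Sum.inl (G.t p.1), Sum.inr (p.1, 1)] p.2
  t := fun p => ![Sum.inr (p.1, 0), Sum.inl (G.t p.1),
                  Sum.inr (p.1, 1), Sum.inl (G.s p.1)] p.2

/-- The diamond graph `Dₙ`: `D₀` is a single edge, and `Dₙ` is obtained from `Dₙ₋₁`
by replacing each edge `uv` by a quadrilateral `u, a, v, b`. -/
def diamondPre : ℕ → PreGraph
  | 0 => ⟨Fin 2, Fin 1, fun _ => 0, fun _ => 1⟩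
  | n + 1 => diamondStep (diamondPre n)

/-- The diamond graph `Dₙ` as a simple graph on its vertex set. -/
def diamondGraph (n : ℕ) : SimpleGraph (diamondPre n).V :=
  SimpleGraph.fromRel (fun u v => ∃ e, (diamondPre n).s e = u ∧ (diamondPre n).t e = v)

/-- The shortest-path metric on the diamond graph `Dₙ`, as a real number. -/
noncomputable def diamondDist (n : ℕ) (a b : (diamondPre n).V) : ℝ :=
  ((diamondGraph n).dist a b : ℝ)

open SimpleGraph

abbrev V2 : Type := (Fin 2 ⊕ (Fin 1 × Fin 2)) ⊕ ((Fin 1 × Fin 4) × Fin 2)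
abbrev E2 : Type := (Fin 1 × Fin 4) × Fin 4

def S2 : E2 → V2 := (diamondPre 2).s
def T2 : E2 → V2 := (diamondPre 2).t

def G2 : SimpleGraph V2 := diamondGraph 2

def md (s : Fin 4) (j : Fin 2) : V2 := Sum.inr ((0, s), j)
def cu : V2 := Sum.inl (Sum.inl 0)
def cv : V2 := Sum.inl (Sum.inl 1)
def ca : V2 := Sum.inl (Sum.inr (0, 0))
def cb : V2 := Sum.inl (Sum.inr (0, 1))

def enc : V2 → Fin 12
  | .inl (.inl i) => if i = 0 then 0 else 1
  | .inl (.inr (_, j)) => if j = (0 : Fin 2) then 2 else 3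
  | .inr ((_, s), j) => ⟨4 + 2 * s.1 + j.1, by have := s.2; have := j.2; omega⟩

def dtab : Fin 12 → Fin 12 → ℤ :=
  ![![(0:ℤ), 4, 2, 2, 1, 1, 3, 3, 3, 3, 1, 1],
  ![4, 0, 2, 2, 3, 3, 1, 1, 1, 1, 3, 3],
  ![2, 2, 0, 4, 1, 1, 1, 1, 3, 3, 3, 3],
  ![2, 2, 4, 0, 3, 3, 3, 3, 1, 1, 1, 1],
  ![1, 3, 1, 3, 0, 2, 2, 2, 4, 4, 2, 2],
  ![1, 3, 1, 3, 2, 0, 2, 2, 4, 4, 2, 2],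
  ![3, 1, 1, 3, 2, 2, 0, 2, 2, 2, 4, 4],
  ![3, 1, 1, 3, 2, 2, 2, 0, 2, 2, 4, 4],
  ![3, 1, 3, 1, 4, 4, 2, 2, 0, 2, 2, 2],
  ![3, 1, 3, 1, 4, 4, 2, 2, 2, 0, 2, 2],
  ![1, 3, 3, 1, 2, 2, 4, 4, 2, 2, 0, 2],
  ![1, 3, 3, 1, 2, 2, 4, 4, 2, 2, 2, 0]]

lemma edges_ne : ∀ e : E2, S2 e ≠ T2 e := by decide

lemma adjE (e : E2) : G2.Adj (S2 e) (T2 e) :=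
  (SimpleGraph.fromRel_adj _ _ _).mpr ⟨edges_ne e, Or.inl ⟨e, rfl, rfl⟩⟩

lemma tlip : ∀ (i : Fin 12) (e : E2),
    dtab i (enc (T2 e)) ≤ dtab i (enc (S2 e)) + 1 ∧
    dtab i (enc (S2 e)) ≤ dtab i (enc (T2 e)) + 1 := by decide

lemma ddiag : ∀ i : Fin 12, dtab i i = 0 := by decide

lemma glip (i : Fin 12) (u v : V2) (h : G2.Adj u v) :
    dtab i (enc v) ≤ dtab i (enc u) + 1 := by
  have h' := (SimpleGraph.fromRel_adj _ u v).mp h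
  obtain ⟨-, ⟨e, h1, h2⟩ | ⟨e, h1, h2⟩⟩ := h'
  · subst h1; subst h2; exact (tlip i e).1
  · subst h1; subst h2; exact (tlip i e).2

lemma walk_pot (g : V2 → ℤ) (hg : ∀ u v, G2.Adj u v → g v ≤ g u + 1) :
    ∀ {a b : V2} (p : G2.Walk a b), g b - g a ≤ (p.length : ℤ) := by
  intro a b p
  induction p with
  | nil => simp
  | @cons u v w h q ih =>
    have h1 := hg u v h
    have h2 : (q.length : ℤ) + 1 = ((Walk.cons h q).length : ℤ) := by
      simp [Walk.length_cons]
    linarith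

lemma dist_ge {a b : V2} (p : G2.Walk a b) :
    dtab (enc a) (enc b) ≤ (G2.dist a b : ℤ) := by
  obtain ⟨q, hq⟩ := p.reachable.exists_walk_length_eq_dist
  have h := walk_pot (fun y => dtab (enc a) (enc y)) (fun u v huv => glip (enc a) u v huv) q
  have h0 := ddiag (enc a)
  rw [hq] at h
  simp only [h0] at h
  omega

lemma dd_lower {a b : V2} (w : G2.Walk a b) (k : ℕ) (hk : (k : ℤ) ≤ dtab (enc a) (enc b)) :
    (k : ℝ) ≤ diamondDist 2 a b := by
  have h := le_trans hk (dist_ge w)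
  have hn : k ≤ G2.dist a b := by exact_mod_cast h
  unfold diamondDist
  exact_mod_cast hn

lemma dd_exact {a b : V2} (w : G2.Walk a b) (hw : w.length = 2)
    (hk : (2 : ℤ) ≤ dtab (enc a) (enc b)) : diamondDist 2 a b = 2 := by
  have h1 : G2.dist a b ≤ 2 := hw ▸ SimpleGraph.dist_le w
  have h2 : 2 ≤ G2.dist a b := by exact_mod_cast le_trans hk (dist_ge w)
  have : G2.dist a b = 2 := le_antisymm h1 h2
  unfold diamondDist
  rw [show (diamondGraph 2).dist a b = G2.dist a b from rfl, this]
  norm_num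

lemma key {H : Type*} [NormedAddCommGroup H] [InnerProductSpace ℝ H]
    (p1 p2 p3 p4 q1 q2 q3 q4 : H) :
    ‖p1 - p2‖ ^ 2 + ‖p1 - p3‖ ^ 2 + ‖p1 - p4‖ ^ 2 + ‖p2 - p3‖ ^ 2 + ‖p2 - p4‖ ^ 2 + ‖p3 - p4‖ ^ 2 + ‖q1 - q2‖ ^ 2 + ‖q1 - q3‖ ^ 2 + ‖q1 - q4‖ ^ 2 + ‖q2 - q3‖ ^ 2 + ‖q2 - q4‖ ^ 2 + ‖q3 - q4‖ ^ 2 ≤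
    ‖p1 - q1‖ ^ 2 + ‖p1 - q2‖ ^ 2 + ‖p1 - q3‖ ^ 2 + ‖p1 - q4‖ ^ 2 + ‖p2 - q1‖ ^ 2 + ‖p2 - q2‖ ^ 2 + ‖p2 - q3‖ ^ 2 + ‖p2 - q4‖ ^ 2 + ‖p3 - q1‖ ^ 2 + ‖p3 - q2‖ ^ 2 + ‖p3 - q3‖ ^ 2 + ‖p3 - q4‖ ^ 2 + ‖p4 - q1‖ ^ 2 + ‖p4 - q2‖ ^ 2 + ‖p4 - q3‖ ^ 2 + ‖p4 - q4‖ ^ 2 := by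
  have h : (0:ℝ) ≤ ‖(p1 + p2 + p3 + p4) - (q1 + q2 + q3 + q4)‖ ^ 2 := sq_nonneg _
  simp only [← real_inner_self_eq_norm_sq] at h ⊢
  simp only [inner_sub_left, inner_sub_right, inner_add_left, inner_add_right] at h ⊢
  linarith [real_inner_comm p1 p2, real_inner_comm p1 p3, real_inner_comm p1 p4, real_inner_comm p1 q1, real_inner_comm p1 q2, real_inner_comm p1 q3, real_inner_comm p1 q4, real_inner_comm p2 p3, real_inner_comm p2 p4, real_inner_comm p2 q1, real_inner_comm p2 q2, real_inner_comm p2 q3, real_inner_comm p2 q4, real_inner_comm p3 p4, real_inner_comm p3 q1, real_inner_comm p3 q2, real_inner_comm p3 q3, real_inner_comm p3 q4, real_inner_comm p4 q1, real_inner_comm p4 q2, real_inner_comm p4 q3, real_inner_comm p4 q4, real_inner_comm q1 q2, real_inner_comm q1 q3, real_inner_comm q1 q4, real_inner_comm q2 q3, real_inner_comm q2 q4, real_inner_comm q3 q4]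


/-- **Theorem 4 for the snowflaked Hilbert space.** Any map `f` from the diamond graph `D₂`
into `ℓ²` satisfying `d(a,b) ≤ ‖f a − f b‖₂² ≤ c · d(a,b)` has `c ≥ 5/4`. -/
theorem diamond_stmt8 (f : (diamondPre 2).V → lp (fun _ : ℕ => ℝ) 2) (c : ℝ)
    (hf : ∀ a b : (diamondPre 2).V,
      diamondDist 2 a b ≤ ‖f a - f b‖ ^ 2 ∧ ‖f a - f b‖ ^ 2 ≤ c * diamondDist 2 a b) :
    c ≥ 5 / 4 := by
  have L1 : (2:ℝ) ≤ ‖f (md 0 0) - f (md 0 1)‖ ^ 2 := by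
    have h := le_trans (dd_lower (Walk.cons (adjE ((0,0),0)).symm (Walk.cons (adjE ((0,0),3)).symm Walk.nil)) 2 (by decide)) (hf (md 0 0) (md 0 1)).1
    exact_mod_cast h
  have L2 : (4:ℝ) ≤ ‖f (md 0 0) - f (md 2 0)‖ ^ 2 := by
    have h := le_trans (dd_lower (Walk.cons (adjE ((0,0),1)) (Walk.cons (adjE ((0,1),0)) (Walk.cons (adjE ((0,1),1)) (Walk.cons (adjE ((0,2),0)) Walk.nil)))) 4 (by decide)) (hf (md 0 0) (md 2 0)).1
    exact_mod_cast h
  have L3 : (4:ℝ) ≤ ‖f (md 0 0) - f (md 2 1)‖ ^ 2 := by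
    have h := le_trans (dd_lower (Walk.cons (adjE ((0,0),1)) (Walk.cons (adjE ((0,1),0)) (Walk.cons (adjE ((0,1),1)) (Walk.cons (adjE ((0,2),3)).symm Walk.nil)))) 4 (by decide)) (hf (md 0 0) (md 2 1)).1
    exact_mod_cast h
  have L4 : (4:ℝ) ≤ ‖f (md 0 1) - f (md 2 0)‖ ^ 2 := by
    have h := le_trans (dd_lower (Walk.cons (adjE ((0,0),2)).symm (Walk.cons (adjE ((0,1),0)) (Walk.cons (adjE ((0,1),1)) (Walk.cons (adjE ((0,2),0)) Walk.nil)))) 4 (by decide)) (hf (md 0 1) (md 2 0)).1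
    exact_mod_cast h
  have L5 : (4:ℝ) ≤ ‖f (md 0 1) - f (md 2 1)‖ ^ 2 := by
    have h := le_trans (dd_lower (Walk.cons (adjE ((0,0),2)).symm (Walk.cons (adjE ((0,1),0)) (Walk.cons (adjE ((0,1),1)) (Walk.cons (adjE ((0,2),3)).symm Walk.nil)))) 4 (by decide)) (hf (md 0 1) (md 2 1)).1
    exact_mod_cast h
  have L6 : (2:ℝ) ≤ ‖f (md 2 0) - f (md 2 1)‖ ^ 2 := by
    have h := le_trans (dd_lower (Walk.cons (adjE ((0,2),0)).symm (Walk.cons (adjE ((0,2),3)).symm Walk.nil)) 2 (by decide)) (hf (md 2 0) (md 2 1)).1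
    exact_mod_cast h
  have L7 : (2:ℝ) ≤ ‖f (md 1 0) - f (md 1 1)‖ ^ 2 := by
    have h := le_trans (dd_lower (Walk.cons (adjE ((0,1),0)).symm (Walk.cons (adjE ((0,1),3)).symm Walk.nil)) 2 (by decide)) (hf (md 1 0) (md 1 1)).1
    exact_mod_cast h
  have L8 : (4:ℝ) ≤ ‖f (md 1 0) - f (md 3 0)‖ ^ 2 := by
    have h := le_trans (dd_lower (Walk.cons (adjE ((0,1),1)) (Walk.cons (adjE ((0,2),0)) (Walk.cons (adjE ((0,2),1)) (Walk.cons (adjE ((0,3),0)) Walk.nil)))) 4 (by decide)) (hf (md 1 0) (md 3 0)).1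
    exact_mod_cast h
  have L9 : (4:ℝ) ≤ ‖f (md 1 0) - f (md 3 1)‖ ^ 2 := by
    have h := le_trans (dd_lower (Walk.cons (adjE ((0,1),1)) (Walk.cons (adjE ((0,2),0)) (Walk.cons (adjE ((0,2),1)) (Walk.cons (adjE ((0,3),3)).symm Walk.nil)))) 4 (by decide)) (hf (md 1 0) (md 3 1)).1
    exact_mod_cast h
  have L10 : (4:ℝ) ≤ ‖f (md 1 1) - f (md 3 0)‖ ^ 2 := by
    have h := le_trans (dd_lower (Walk.cons (adjE ((0,1),2)).symm (Walk.cons (adjE ((0,2),0)) (Walk.cons (adjE ((0,2),1)) (Walk.cons (adjE ((0,3),0)) Walk.nil)))) 4 (by decide)) (hf (md 1 1) (md 3 0)).1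
    exact_mod_cast h
  have L11 : (4:ℝ) ≤ ‖f (md 1 1) - f (md 3 1)‖ ^ 2 := by
    have h := le_trans (dd_lower (Walk.cons (adjE ((0,1),2)).symm (Walk.cons (adjE ((0,2),0)) (Walk.cons (adjE ((0,2),1)) (Walk.cons (adjE ((0,3),3)).symm Walk.nil)))) 4 (by decide)) (hf (md 1 1) (md 3 1)).1
    exact_mod_cast h
  have L12 : (2:ℝ) ≤ ‖f (md 3 0) - f (md 3 1)‖ ^ 2 := by
    have h := le_trans (dd_lower (Walk.cons (adjE ((0,3),0)).symm (Walk.cons (adjE ((0,3),3)).symm Walk.nil)) 2 (by decide)) (hf (md 3 0) (md 3 1)).1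
    exact_mod_cast h
  have U1 : ‖f (md 0 0) - f (md 1 0)‖ ^ 2 ≤ c * 2 := by
    have h := (hf (md 0 0) (md 1 0)).2
    rwa [dd_exact (a := (md 0 0)) (b := (md 1 0)) (Walk.cons (adjE ((0,0),1)) (Walk.cons (adjE ((0,1),0)) Walk.nil)) rfl (by decide)] at h
  have U2 : ‖f (md 0 0) - f (md 1 1)‖ ^ 2 ≤ c * 2 := by
    have h := (hf (md 0 0) (md 1 1)).2
    rwa [dd_exact (a := (md 0 0)) (b := (md 1 1)) (Walk.cons (adjE ((0,0),1)) (Walk.cons (adjE ((0,1),3)).symm Walk.nil)) rfl (by decide)] at h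
  have U3 : ‖f (md 0 0) - f (md 3 0)‖ ^ 2 ≤ c * 2 := by
    have h := (hf (md 0 0) (md 3 0)).2
    rwa [dd_exact (a := (md 0 0)) (b := (md 3 0)) (Walk.cons (adjE ((0,0),0)).symm (Walk.cons (adjE ((0,3),1)).symm Walk.nil)) rfl (by decide)] at h
  have U4 : ‖f (md 0 0) - f (md 3 1)‖ ^ 2 ≤ c * 2 := by
    have h := (hf (md 0 0) (md 3 1)).2
    rwa [dd_exact (a := (md 0 0)) (b := (md 3 1)) (Walk.cons (adjE ((0,0),0)).symm (Walk.cons (adjE ((0,3),2)) Walk.nil)) rfl (by decide)] at h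
  have U5 : ‖f (md 0 1) - f (md 1 0)‖ ^ 2 ≤ c * 2 := by
    have h := (hf (md 0 1) (md 1 0)).2
    rwa [dd_exact (a := (md 0 1)) (b := (md 1 0)) (Walk.cons (adjE ((0,0),2)).symm (Walk.cons (adjE ((0,1),0)) Walk.nil)) rfl (by decide)] at h
  have U6 : ‖f (md 0 1) - f (md 1 1)‖ ^ 2 ≤ c * 2 := by
    have h := (hf (md 0 1) (md 1 1)).2
    rwa [dd_exact (a := (md 0 1)) (b := (md 1 1)) (Walk.cons (adjE ((0,0),2)).symm (Walk.cons (adjE ((0,1),3)).symm Walk.nil)) rfl (by decide)] at h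
  have U7 : ‖f (md 0 1) - f (md 3 0)‖ ^ 2 ≤ c * 2 := by
    have h := (hf (md 0 1) (md 3 0)).2
    rwa [dd_exact (a := (md 0 1)) (b := (md 3 0)) (Walk.cons (adjE ((0,0),3)) (Walk.cons (adjE ((0,3),1)).symm Walk.nil)) rfl (by decide)] at h
  have U8 : ‖f (md 0 1) - f (md 3 1)‖ ^ 2 ≤ c * 2 := by
    have h := (hf (md 0 1) (md 3 1)).2
    rwa [dd_exact (a := (md 0 1)) (b := (md 3 1)) (Walk.cons (adjE ((0,0),3)) (Walk.cons (adjE ((0,3),2)) Walk.nil)) rfl (by decide)] at h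
  have U9 : ‖f (md 2 0) - f (md 1 0)‖ ^ 2 ≤ c * 2 := by
    have h := (hf (md 2 0) (md 1 0)).2
    rwa [dd_exact (a := (md 2 0)) (b := (md 1 0)) (Walk.cons (adjE ((0,2),0)).symm (Walk.cons (adjE ((0,1),1)).symm Walk.nil)) rfl (by decide)] at h
  have U10 : ‖f (md 2 0) - f (md 1 1)‖ ^ 2 ≤ c * 2 := by
    have h := (hf (md 2 0) (md 1 1)).2
    rwa [dd_exact (a := (md 2 0)) (b := (md 1 1)) (Walk.cons (adjE ((0,2),0)).symm (Walk.cons (adjE ((0,1),2)) Walk.nil)) rfl (by decide)] at h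
  have U11 : ‖f (md 2 0) - f (md 3 0)‖ ^ 2 ≤ c * 2 := by
    have h := (hf (md 2 0) (md 3 0)).2
    rwa [dd_exact (a := (md 2 0)) (b := (md 3 0)) (Walk.cons (adjE ((0,2),1)) (Walk.cons (adjE ((0,3),0)) Walk.nil)) rfl (by decide)] at h
  have U12 : ‖f (md 2 0) - f (md 3 1)‖ ^ 2 ≤ c * 2 := by
    have h := (hf (md 2 0) (md 3 1)).2
    rwa [dd_exact (a := (md 2 0)) (b := (md 3 1)) (Walk.cons (adjE ((0,2),1)) (Walk.cons (adjE ((0,3),3)).symm Walk.nil)) rfl (by decide)] at h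
  have U13 : ‖f (md 2 1) - f (md 1 0)‖ ^ 2 ≤ c * 2 := by
    have h := (hf (md 2 1) (md 1 0)).2
    rwa [dd_exact (a := (md 2 1)) (b := (md 1 0)) (Walk.cons (adjE ((0,2),3)) (Walk.cons (adjE ((0,1),1)).symm Walk.nil)) rfl (by decide)] at h
  have U14 : ‖f (md 2 1) - f (md 1 1)‖ ^ 2 ≤ c * 2 := by
    have h := (hf (md 2 1) (md 1 1)).2
    rwa [dd_exact (a := (md 2 1)) (b := (md 1 1)) (Walk.cons (adjE ((0,2),3)) (Walk.cons (adjE ((0,1),2)) Walk.nil)) rfl (by decide)] at h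
  have U15 : ‖f (md 2 1) - f (md 3 0)‖ ^ 2 ≤ c * 2 := by
    have h := (hf (md 2 1) (md 3 0)).2
    rwa [dd_exact (a := (md 2 1)) (b := (md 3 0)) (Walk.cons (adjE ((0,2),2)).symm (Walk.cons (adjE ((0,3),0)) Walk.nil)) rfl (by decide)] at h
  have U16 : ‖f (md 2 1) - f (md 3 1)‖ ^ 2 ≤ c * 2 := by
    have h := (hf (md 2 1) (md 3 1)).2
    rwa [dd_exact (a := (md 2 1)) (b := (md 3 1)) (Walk.cons (adjE ((0,2),2)).symm (Walk.cons (adjE ((0,3),3)).symm Walk.nil)) rfl (by decide)] at h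
  have hkey := key (f (md 0 0)) (f (md 0 1)) (f (md 2 0)) (f (md 2 1)) (f (md 1 0)) (f (md 1 1)) (f (md 3 0)) (f (md 3 1))
  linarith
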